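/- Suppose a holomorphic function g : ℋⁿ → ℂ has a representation g(τ) = ∑_{t ∈ S} τ^t g_t(τ) with S ⊂ ℕⁿ finite, τ^t := ∏ᵢ τᵢ^{tᵢ}, and each g_t satisfying g_t(τ + v) = λ_v g_t(τ) for fixed nonzero constants λ_v (v in a lattice Λ) independent of t. If g ≡ 0, then g_t ≡ 0 for every t ∈ S. -/
import Mathlib


/-- A multivariate polynomial over `ℂ` vanishing at every integer point is zero. -/
lemma mv_eq_zero_of_int_eval {n : ℕ} (p : MvPolynomial (Fin n) ℂ)
    (h : ∀ m : Fin n → ℤ, MvPolynomial.eval (fun i => (m i : ℂ)) p = 0) : p = 0 := by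
  induction n with
  | zero =>
    rw [MvPolynomial.eq_C_of_isEmpty p]
    have := h finZeroElim
    rw [MvPolynomial.eq_C_of_isEmpty p, MvPolynomial.eval_C] at this
    rw [this, map_zero]
  | succ n ih =>
    apply (MvPolynomial.finSuccEquiv ℂ n).injective
    rw [map_zero]
    apply Polynomial.ext
    intro k
    rw [Polynomial.coeff_zero]
    apply ih
    intro m
    have hpoly : (Polynomial.map (MvPolynomial.eval fun i => (m i : ℂ))
        (MvPolynomial.finSuccEquiv ℂ n p)) = 0 := by
      apply Polynomial.eq_zero_of_infinite_isRoot
      apply Set.Infinite.mono (s := Set.range (Int.cast : ℤ → ℂ))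
      · rintro _ ⟨y, rfl⟩
        have := h (Fin.cons y m)
        have hfun : (Fin.cons (↑y) fun i => ((m i : ℤ) : ℂ)) = fun i => ((Fin.cons (α := fun _ => ℤ) y m i : ℤ) : ℂ) := by
          funext i
          exact Fin.cases rfl (fun j => rfl) i
        rw [Set.mem_setOf_eq, Polynomial.IsRoot,
          ← MvPolynomial.eval_eq_eval_mv_eval', hfun]
        exact this
      · exact Set.infinite_range_of_injective Int.cast_injective
    have := congrArg (fun q => Polynomial.coeff q k) hpoly
    simpa [Polynomial.coeff_map] using this

/-- Uniqueness of polynomial Fourier expansions, fixed-character case: if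
`g τ = ∑_{t ∈ S} τ^t g_t τ ≡ 0` on `ℋⁿ`, where each `g_t` satisfies
`g_t (τ + v) = λ_v g_t τ` for every lattice vector `v` (with `λ_v ≠ 0` independent
of `t`), then every `g_t ≡ 0`. -/

theorem polynomial_expansion_unique_fixed_character (n : ℕ)
    (v : Fin n → Fin n → ℝ) (hli : LinearIndependent ℝ v)
    (S : Finset (Fin n → ℕ)) (g : (Fin n → ℕ) → (Fin n → ℂ) → ℂ)
    (lam : (Fin n → ℤ) → ℂ) (hlam : ∀ m, lam m ≠ 0)
    (hper : ∀ t ∈ S, ∀ (m : Fin n → ℤ) (τ : Fin n → ℂ), (∀ l, 0 < (τ l).im) →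
      g t (τ + fun j => ∑ i, (m i : ℂ) * (v i j : ℂ)) = lam m * g t τ)
    (hzero : ∀ τ : Fin n → ℂ, (∀ l, 0 < (τ l).im) →
      ∑ t ∈ S, (∏ i, τ i ^ t i) * g t τ = 0) :
    ∀ t ∈ S, ∀ τ : Fin n → ℂ, (∀ l, 0 < (τ l).im) → g t τ = 0 := by
  classical
  intro t₀ ht₀ τ hτ
  set c : (Fin n → ℕ) → ℂ := fun t => g t τ with hc
  -- Step 1: vanishing of the shifted sums
  have key : ∀ m : Fin n → ℤ,
      ∑ t ∈ S, (∏ i, (τ i + ∑ j, (m j : ℂ) * (v j i : ℂ)) ^ t i) * c t = 0 := by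
    intro m
    set τ' : Fin n → ℂ := τ + fun l => ∑ j, (m j : ℂ) * (v j l : ℂ) with hτ'
    have hre : ∀ l, (∑ j, (m j : ℂ) * (v j l : ℂ)) = ((∑ j, (m j : ℝ) * v j l : ℝ) : ℂ) := by
      intro l; push_cast; ring
    have hτ'pos : ∀ l, 0 < (τ' l).im := by
      intro l
      simp only [hτ', Pi.add_apply, Complex.add_im, hre l, Complex.ofReal_im, add_zero]
      exact hτ l
    have h0 := hzero τ' hτ'pos
    have h1 : ∑ t ∈ S, (∏ i, τ' i ^ t i) * (lam m * c t) = 0 := by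
      rw [← h0]
      refine Finset.sum_congr rfl fun t ht => ?_
      congr 1
      exact (hper t ht m τ hτ).symm
    have h2 : lam m * ∑ t ∈ S, (∏ i, τ' i ^ t i) * c t = 0 := by
      rw [Finset.mul_sum, ← h1]
      exact Finset.sum_congr rfl fun t ht => by ring
    rcases mul_eq_zero.mp h2 with h | h
    · exact absurd h (hlam m)
    · rw [← h]
      exact Finset.sum_congr rfl fun t ht => by rw [hτ']; rfl
  -- Step 2: polynomial setup
  let Q : MvPolynomial (Fin n) ℂ :=
    ∑ t ∈ S, MvPolynomial.monomial (Finsupp.equivFunOnFinite.symm t) (c t)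
  have hQeval : ∀ y : Fin n → ℂ,
      MvPolynomial.eval y Q = ∑ t ∈ S, (∏ i, y i ^ t i) * c t := by
    intro y
    rw [map_sum]
    refine Finset.sum_congr rfl fun t ht => ?_
    rw [MvPolynomial.eval_monomial, Finsupp.prod_pow, mul_comm]
    congr 1
  let σp : Fin n → MvPolynomial (Fin n) ℂ :=
    fun i => MvPolynomial.C (τ i) + ∑ j, MvPolynomial.C ((v j i : ℝ) : ℂ) * MvPolynomial.X j
  let P := MvPolynomial.bind₁ σp Q
  have hPeval : ∀ z : Fin n → ℂ,
      MvPolynomial.eval z P = MvPolynomial.eval (fun i => τ i + ∑ j, z j * (v j i : ℂ)) Q := by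
    intro z
    have hb := MvPolynomial.aeval_bind₁ (R := ℂ) z σp Q
    have h1 : (fun i => MvPolynomial.aeval z (σp i)) =
        fun i => τ i + ∑ j, z j * ((v j i : ℝ) : ℂ) := by
      funext i
      simp [σp, mul_comm]
    have h2 : ∀ (w : Fin n → ℂ) (p : MvPolynomial (Fin n) ℂ),
        MvPolynomial.aeval w p = MvPolynomial.eval w p := fun w p => rfl
    rw [h2, h1, h2] at hb
    exact hb
  have hP0 : P = 0 := by
    apply mv_eq_zero_of_int_eval
    intro m
    rw [hPeval, hQeval]
    exact key m
  -- Step 3: the matrix is invertible, so Q vanishes everywhere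
  let M : Matrix (Fin n) (Fin n) ℂ := Matrix.of fun i j => ((v j i : ℝ) : ℂ)
  have hM : IsUnit M := by
    have h0 : IsUnit (Matrix.of v) :=
      Matrix.linearIndependent_rows_iff_isUnit.mp hli
    have h1 : IsUnit ((Matrix.of v).map (algebraMap ℝ ℂ)) := by
      have := h0.map (RingHom.mapMatrix (algebraMap ℝ ℂ))
      simpa [RingHom.mapMatrix_apply] using this
    have h2 : M = Matrix.transpose ((Matrix.of v).map (algebraMap ℝ ℂ)) := by
      ext i j
      simp [M, Matrix.transpose_apply, Matrix.map_apply]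
    rw [h2, Matrix.isUnit_transpose]
    exact h1
  have hQ0 : Q = 0 := by
    apply MvPolynomial.funext
    intro y
    rw [map_zero]
    set z : Fin n → ℂ := Matrix.mulVec M⁻¹ (fun i => y i - τ i) with hz
    have hMz : Matrix.mulVec M z = fun i => y i - τ i := by
      rw [hz, Matrix.mulVec_mulVec, Matrix.mul_nonsing_inv _ ((Matrix.isUnit_iff_isUnit_det M).mp hM),
        Matrix.one_mulVec]
    have hy : (fun i => τ i + ∑ j, z j * ((v j i : ℝ) : ℂ)) = y := by
      funext i
      have hmi := congrFun hMz i
      simp only [Matrix.mulVec, dotProduct] at hmi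
      have : ∑ j, z j * ((v j i : ℝ) : ℂ) = y i - τ i := by
        rw [← hmi]
        exact Finset.sum_congr rfl fun j _ => by rw [mul_comm]; rfl
      rw [this]; ring
    calc MvPolynomial.eval y Q = MvPolynomial.eval z P := by rw [hPeval, hy]
      _ = 0 := by rw [hP0, map_zero]
  -- Step 4: extract the coefficient
  have hco := congrArg (MvPolynomial.coeff (Finsupp.equivFunOnFinite.symm t₀)) hQ0
  rw [MvPolynomial.coeff_zero, MvPolynomial.coeff_sum] at hco
  simp only [MvPolynomial.coeff_monomial] at hco
  rw [Finset.sum_eq_single t₀] at hco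
  · rw [if_pos rfl] at hco
    exact hco
  · intro b hb hbne
    rw [if_neg]
    exact fun hcc => hbne (Finsupp.equivFunOnFinite.symm.injective hcc)
  · intro h; exact absurd ht₀ h
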